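/- Let h : (0,∞) → ℝ be smooth and ε > 0, and define on {(r,s) ∈ ℝ² : 0 < s < r} the function φ(r,s) := s·h(r) + √π·s·e^{r²}·(r² + ε + 1/2)·erf(s) + e^{r² − s²}·(r² + ε), where erf(s) = (2/√π)·∫₀ˢ e^{−t²} dt. Then √(r² − s²)·(φ − s·φ_s) = √(r² − s²)·(r² − s² + ε)·e^{r² − s²}, and consequently r·φ_ss + s·φ_rs − φ_r = 0 on this domain. -/

import Mathlib

/-- Partial derivative with respect to the first variable `r`. -/
noncomputable def pderivR (f : ℝ → ℝ → ℝ) (r s : ℝ) : ℝ := deriv (fun t => f t s) r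

/-- Partial derivative with respect to the second variable `s`. -/
noncomputable def pderivS (f : ℝ → ℝ → ℝ) (r s : ℝ) : ℝ := deriv (fun t => f r t) s

/-- The Gauss error function `erf(s) = (2/√π)·∫₀ˢ e^{−t²} dt`. -/
noncomputable def erf (s : ℝ) : ℝ :=
  (2 / Real.sqrt Real.pi) * ∫ t in (0 : ℝ)..s, Real.exp (-t ^ 2)

lemma erf_hasDerivAt (s : ℝ) :
    HasDerivAt erf (2 / Real.sqrt Real.pi * Real.exp (-s ^ 2)) s := by
  have hc : Continuous fun t : ℝ => Real.exp (-t ^ 2) := by continuity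
  have h1 : HasDerivAt (fun u : ℝ => ∫ t in (0:ℝ)..u, Real.exp (-t ^ 2))
      (Real.exp (-s ^ 2)) s :=
    intervalIntegral.integral_hasDerivAt_right (hc.intervalIntegrable 0 s)
      (hc.stronglyMeasurableAtFilter _ _) hc.continuousAt
  have := h1.const_mul (2 / Real.sqrt Real.pi)
  exact this

lemma hπ2 : Real.sqrt Real.pi * (2 / Real.sqrt Real.pi) = 2 := by
  have : Real.sqrt Real.pi ≠ 0 := ne_of_gt (Real.sqrt_pos.2 Real.pi_pos)
  field_simp

lemma exp_mul_exp (a b : ℝ) : Real.exp a * Real.exp (-b) = Real.exp (a - b) := by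
  rw [← Real.exp_add]; ring_nf

/-- s-derivative of φ. -/
lemma hasDerivAt_S (h : ℝ → ℝ) (ε : ℝ) (t u : ℝ) :
    HasDerivAt (fun u : ℝ => u * h t
        + Real.sqrt Real.pi * u * Real.exp (t ^ 2) * (t ^ 2 + ε + 1 / 2) * erf u
        + Real.exp (t ^ 2 - u ^ 2) * (t ^ 2 + ε))
      (h t + Real.sqrt Real.pi * Real.exp (t ^ 2) * (t ^ 2 + ε + 1 / 2) * erf u
        + u * Real.exp (t ^ 2 - u ^ 2)) u := by
  have h1 : HasDerivAt (fun u : ℝ => u * h t) (h t) u := by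
    simpa using (hasDerivAt_id u).mul_const (h t)
  have h2 : HasDerivAt (fun u : ℝ => u * erf u)
      (erf u + u * (2 / Real.sqrt Real.pi * Real.exp (-u ^ 2))) u := by
    have := (hasDerivAt_id u).mul (erf_hasDerivAt u)
    refine this.congr_deriv ?_
    rw [one_mul]; rfl
  have h2' := h2.const_mul (Real.sqrt Real.pi * Real.exp (t ^ 2) * (t ^ 2 + ε + 1 / 2))
  have h3 : HasDerivAt (fun u : ℝ => Real.exp (t ^ 2 - u ^ 2))
      (Real.exp (t ^ 2 - u ^ 2) * (-(2 * u))) u := by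
    have := (((hasDerivAt_pow 2 u)).const_sub (t ^ 2)).exp
    simpa using this
  have h3' := h3.mul_const (t ^ 2 + ε)
  have H := (h1.add h2').add h3'
  have hfun : (fun u : ℝ => u * h t
        + Real.sqrt Real.pi * Real.exp (t ^ 2) * (t ^ 2 + ε + 1 / 2) * (u * erf u)
        + Real.exp (t ^ 2 - u ^ 2) * (t ^ 2 + ε))
      = (fun u : ℝ => u * h t
        + Real.sqrt Real.pi * u * Real.exp (t ^ 2) * (t ^ 2 + ε + 1 / 2) * erf u
        + Real.exp (t ^ 2 - u ^ 2) * (t ^ 2 + ε)) := by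
    funext u; ring
  rw [← hfun]
  refine H.congr_deriv ?_
  have he := exp_mul_exp (t ^ 2) (u ^ 2)
  have hπ : Real.sqrt Real.pi ≠ 0 := ne_of_gt (Real.sqrt_pos.2 Real.pi_pos)
  rw [← he]
  field_simp
  ring

/-- ss-derivative. -/
lemma hasDerivAt_SS (h : ℝ → ℝ) (ε : ℝ) (r s : ℝ) :
    HasDerivAt (fun u : ℝ => h r
        + Real.sqrt Real.pi * Real.exp (r ^ 2) * (r ^ 2 + ε + 1 / 2) * erf u
        + u * Real.exp (r ^ 2 - u ^ 2))
      ((2 * r ^ 2 + 2 * ε + 2 - 2 * s ^ 2) * Real.exp (r ^ 2 - s ^ 2)) s := by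
  have h1 : HasDerivAt (fun _ : ℝ => h r) 0 s := hasDerivAt_const s (h r)
  have h2 := (erf_hasDerivAt s).const_mul
      (Real.sqrt Real.pi * Real.exp (r ^ 2) * (r ^ 2 + ε + 1 / 2))
  have h3 : HasDerivAt (fun u : ℝ => Real.exp (r ^ 2 - u ^ 2))
      (Real.exp (r ^ 2 - s ^ 2) * (-(2 * s))) s := by
    have := (((hasDerivAt_pow 2 s)).const_sub (r ^ 2)).exp
    simpa using this
  have h3' := (hasDerivAt_id s).mul h3
  have H := (h1.add h2).add h3'
  refine H.congr_deriv ?_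
  rw [show id s = s from rfl]
  have he := exp_mul_exp (r ^ 2) (s ^ 2)
  have hπ : Real.sqrt Real.pi ≠ 0 := ne_of_gt (Real.sqrt_pos.2 Real.pi_pos)
  rw [← he]
  field_simp
  ring

/-- r-derivative of the s-derivative. -/
lemma hasDerivAt_SR (h : ℝ → ℝ) (h' ε r s : ℝ) (hd : HasDerivAt h h' r) :
    HasDerivAt (fun t : ℝ => h t
        + Real.sqrt Real.pi * Real.exp (t ^ 2) * (t ^ 2 + ε + 1 / 2) * erf s
        + s * Real.exp (t ^ 2 - s ^ 2))
      (h' + Real.sqrt Real.pi * erf s * Real.exp (r ^ 2)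
            * (2 * r * (r ^ 2 + ε + 1 / 2) + 2 * r)
          + 2 * r * s * Real.exp (r ^ 2 - s ^ 2)) r := by
  have hp2 : HasDerivAt (fun t : ℝ => t ^ 2) (2 * r) r := by
    simpa using hasDerivAt_pow 2 r
  have he : HasDerivAt (fun t : ℝ => Real.exp (t ^ 2))
      (Real.exp (r ^ 2) * (2 * r)) r := hp2.exp
  have h2 := he.mul (hp2.add_const (ε + 1 / 2))
  have h2' := h2.const_mul (Real.sqrt Real.pi)
  have h2'' := h2'.mul_const (erf s)
  have h3 : HasDerivAt (fun t : ℝ => Real.exp (t ^ 2 - s ^ 2))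
      (Real.exp (r ^ 2 - s ^ 2) * (2 * r)) r := by
    simpa using (hp2.sub_const (s ^ 2)).exp
  have h3' := h3.const_mul s
  have H := (hd.add h2'').add h3'
  have hfun : (fun t : ℝ => h t
        + Real.sqrt Real.pi * (Real.exp (t ^ 2) * (t ^ 2 + (ε + 1 / 2))) * erf s
        + s * Real.exp (t ^ 2 - s ^ 2))
      = (fun t : ℝ => h t
        + Real.sqrt Real.pi * Real.exp (t ^ 2) * (t ^ 2 + ε + 1 / 2) * erf s
        + s * Real.exp (t ^ 2 - s ^ 2)) := by
    funext t; ring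
  rw [← hfun]
  refine H.congr_deriv ?_
  ring

/-- r-derivative of φ. -/
lemma hasDerivAt_R (h : ℝ → ℝ) (h' ε r s : ℝ) (hd : HasDerivAt h h' r) :
    HasDerivAt (fun t : ℝ => s * h t
        + Real.sqrt Real.pi * s * Real.exp (t ^ 2) * (t ^ 2 + ε + 1 / 2) * erf s
        + Real.exp (t ^ 2 - s ^ 2) * (t ^ 2 + ε))
      (s * h' + Real.sqrt Real.pi * s * erf s * Real.exp (r ^ 2)
            * (2 * r * (r ^ 2 + ε + 1 / 2) + 2 * r)
          + Real.exp (r ^ 2 - s ^ 2) * (2 * r * (r ^ 2 + ε) + 2 * r)) r := by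
  have hp2 : HasDerivAt (fun t : ℝ => t ^ 2) (2 * r) r := by
    simpa using hasDerivAt_pow 2 r
  have he : HasDerivAt (fun t : ℝ => Real.exp (t ^ 2))
      (Real.exp (r ^ 2) * (2 * r)) r := hp2.exp
  have h1 := hd.const_mul s
  have h2 := he.mul (hp2.add_const (ε + 1 / 2))
  have h2' := (h2.const_mul (Real.sqrt Real.pi * s)).mul_const (erf s)
  have h3 : HasDerivAt (fun t : ℝ => Real.exp (t ^ 2 - s ^ 2))
      (Real.exp (r ^ 2 - s ^ 2) * (2 * r)) r := by
    simpa using (hp2.sub_const (s ^ 2)).exp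
  have h3' := h3.mul (hp2.add_const ε)
  have H := (h1.add h2').add h3'
  have hfun : (fun t : ℝ => s * h t
        + Real.sqrt Real.pi * s * (Real.exp (t ^ 2) * (t ^ 2 + (ε + 1 / 2))) * erf s
        + Real.exp (t ^ 2 - s ^ 2) * (t ^ 2 + ε))
      = (fun t : ℝ => s * h t
        + Real.sqrt Real.pi * s * Real.exp (t ^ 2) * (t ^ 2 + ε + 1 / 2) * erf s
        + Real.exp (t ^ 2 - s ^ 2) * (t ^ 2 + ε)) := by
    funext t; ring
  rw [← hfun]
  refine H.congr_deriv ?_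
  ring

/-- Corollary 2, member `m = 1` (Example 4): for
`φ(r,s) := s·h(r) + √π·s·e^{r²}·(r² + ε + 1/2)·erf(s) + e^{r² − s²}·(r² + ε)`
one has `√(r² − s²)·(φ − s·φ_s) = √(r² − s²)·(r² − s² + ε)·e^{r² − s²}`, and
consequently `r·φ_ss + s·φ_rs − φ_r = 0` on `{0 < s < r}`. -/
theorem stmt_18 (h : ℝ → ℝ) (hh : ContDiffOn ℝ (⊤ : ℕ∞) h (Set.Ioi 0)) (ε : ℝ) (hε : 0 < ε)
    (φ : ℝ → ℝ → ℝ)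
    (hφ : ∀ r s : ℝ, φ r s =
      s * h r
        + Real.sqrt Real.pi * s * Real.exp (r ^ 2) * (r ^ 2 + ε + 1 / 2) * erf s
        + Real.exp (r ^ 2 - s ^ 2) * (r ^ 2 + ε)) :
    ∀ r s : ℝ, 0 < s → s < r →
      Real.sqrt (r ^ 2 - s ^ 2) * (φ r s - s * pderivS φ r s)
          = Real.sqrt (r ^ 2 - s ^ 2) * (r ^ 2 - s ^ 2 + ε) *
              Real.exp (r ^ 2 - s ^ 2)
      ∧ r * pderivS (pderivS φ) r s + s * pderivR (pderivS φ) r s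
          - pderivR φ r s = 0 := by
  intro r s hs hsr
  have hr0 : (0:ℝ) < r := hs.trans hsr
  -- first-order s-derivative, globally
  have hD1 : ∀ t u : ℝ, pderivS φ t u
      = h t + Real.sqrt Real.pi * Real.exp (t ^ 2) * (t ^ 2 + ε + 1 / 2) * erf u
        + u * Real.exp (t ^ 2 - u ^ 2) := by
    intro t u
    have hfun : (fun u : ℝ => φ t u) = (fun u : ℝ => u * h t
        + Real.sqrt Real.pi * u * Real.exp (t ^ 2) * (t ^ 2 + ε + 1 / 2) * erf u
        + Real.exp (t ^ 2 - u ^ 2) * (t ^ 2 + ε)) := funext fun u => hφ t u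
    show deriv (fun u => φ t u) u = _
    rw [hfun]
    exact (hasDerivAt_S h ε t u).deriv
  -- h is differentiable at r
  have hd : HasDerivAt h (deriv h r) r :=
    (((hh.differentiableOn (by simp)).differentiableAt (Ioi_mem_nhds hr0))).hasDerivAt
  -- second derivatives
  have hSS : pderivS (pderivS φ) r s
      = (2 * r ^ 2 + 2 * ε + 2 - 2 * s ^ 2) * Real.exp (r ^ 2 - s ^ 2) := by
    have hfun : (fun u : ℝ => pderivS φ r u) = (fun u : ℝ => h r
        + Real.sqrt Real.pi * Real.exp (r ^ 2) * (r ^ 2 + ε + 1 / 2) * erf u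
        + u * Real.exp (r ^ 2 - u ^ 2)) := funext fun u => hD1 r u
    show deriv (fun u => pderivS φ r u) s = _
    rw [hfun]
    exact (hasDerivAt_SS h ε r s).deriv
  have hSR : pderivR (pderivS φ) r s
      = deriv h r + Real.sqrt Real.pi * erf s * Real.exp (r ^ 2)
            * (2 * r * (r ^ 2 + ε + 1 / 2) + 2 * r)
          + 2 * r * s * Real.exp (r ^ 2 - s ^ 2) := by
    have hfun : (fun t : ℝ => pderivS φ t s) = (fun t : ℝ => h t
        + Real.sqrt Real.pi * Real.exp (t ^ 2) * (t ^ 2 + ε + 1 / 2) * erf s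
        + s * Real.exp (t ^ 2 - s ^ 2)) := funext fun t => hD1 t s
    show deriv (fun t => pderivS φ t s) r = _
    rw [hfun]
    exact (hasDerivAt_SR h (deriv h r) ε r s hd).deriv
  have hR : pderivR φ r s
      = s * deriv h r + Real.sqrt Real.pi * s * erf s * Real.exp (r ^ 2)
            * (2 * r * (r ^ 2 + ε + 1 / 2) + 2 * r)
          + Real.exp (r ^ 2 - s ^ 2) * (2 * r * (r ^ 2 + ε) + 2 * r) := by
    have hfun : (fun t : ℝ => φ t s) = (fun t : ℝ => s * h t
        + Real.sqrt Real.pi * s * Real.exp (t ^ 2) * (t ^ 2 + ε + 1 / 2) * erf s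
        + Real.exp (t ^ 2 - s ^ 2) * (t ^ 2 + ε)) := funext fun t => hφ t s
    show deriv (fun t => φ t s) r = _
    rw [hfun]
    exact (hasDerivAt_R h (deriv h r) ε r s hd).deriv
  constructor
  · rw [hφ, hD1]; ring
  · rw [hSS, hSR, hR]; ring
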